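/- arXiv:1204.4173 — 3 statements merged into one kernel-verified Lean document; each statement's English description precedes it below -/
import Mathlib

section
/- For every countable ordinal γ > 1 and every nondecreasing sequence of ordinals (a_n) with limit sup_n (a_n + 1) = γ, and every α with 1 < α ≤ γ, there exists a nondecreasing ω-sequence (b_n) of ordinals with b_n ≤ a_n for all n and sup_n (b_n + 1) = α. (This is the essential content of the existence of the coherent sequence system in Lemma 2.2.) -/
/-!
Since `α` is countable and nonzero, enumerating `Iio α` and taking running maxima gives a
nondecreasing `c` with `⨆ n, c n + 1 = α`. The pointwise minimum `b n = min (a n) (c n)` is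
nondecreasing and below `a`, and for nondecreasing sequences the supremum commutes with `min`,
so `⨆ n, b n + 1 = min γ α = α`.
-/

open Set

theorem Monotone.ciSup_min {α ι : Type*} [ConditionallyCompleteLinearOrder α] [Nonempty ι]
    [Preorder ι] [IsDirectedOrder ι] {f g : ι → α} (hf : Monotone f) (hg : Monotone g)
    (hbf : BddAbove (range f)) (hbg : BddAbove (range g)) :
    ⨆ i, min (f i) (g i) = min (⨆ i, f i) (⨆ i, g i) := by
  obtain ⟨B, hB⟩ := hbf
  have hbfg : BddAbove (range fun i ↦ min (f i) (g i)) :=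
    ⟨B, forall_mem_range.2 fun i ↦ (min_le_left _ _).trans (hB (mem_range_self i))⟩
  refine le_antisymm (ciSup_le fun i ↦ min_le_min (le_ciSup ⟨B, hB⟩ i) (le_ciSup hbg i)) ?_
  by_contra! hlt
  obtain ⟨i, hi⟩ := exists_lt_of_lt_ciSup (hlt.trans_le (min_le_left _ _))
  obtain ⟨j, hj⟩ := exists_lt_of_lt_ciSup (hlt.trans_le (min_le_right _ _))
  obtain ⟨k, hik, hjk⟩ := directed_of (· ≤ ·) i j
  have hk : ⨆ i, min (f i) (g i) < min (f k) (g k) :=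
    lt_min (hi.trans_le (hf hik)) (hj.trans_le (hg hjk))
  exact hk.not_ge (le_ciSup hbfg k)

namespace Ordinal

theorem exists_monotone_iSup_add_one_eq {o : Ordinal} (ho : o.card ≤ Cardinal.aleph0)
    (ho₀ : o ≠ 0) : ∃ c : ℕ → Ordinal, Monotone c ∧ ⨆ n, c n + 1 = o := by
  have hcount : (Iio o).Countable := by
    rw [← Cardinal.le_aleph0_iff_set_countable, Cardinal.mk_Iio_ordinal, Cardinal.lift_le_aleph0]
    exact ho
  obtain ⟨g, hg⟩ := hcount.exists_eq_range ⟨0, pos_iff_ne_zero.2 ho₀⟩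
  have hg_lt : ∀ k, g k < o := fun k ↦ show g k ∈ Iio o from hg ▸ mem_range_self k
  refine ⟨partialSups g, partialSups_monotone g, le_antisymm ?_ ?_⟩
  · refine iSup_add_one_le fun n ↦ ?_
    obtain ⟨k, -, hk⟩ := exists_partialSups_eq g n
    exact hk ▸ hg_lt k
  · refine le_of_forall_lt fun β hβ ↦ ?_
    obtain ⟨k, rfl⟩ : β ∈ range g := hg ▸ hβ
    exact lt_iSup_add_one_iff.2 ⟨k, le_partialSups g k⟩

theorem iSup_min_add_one {a c : ℕ → Ordinal} (ha : Monotone a) (hc : Monotone c) :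
    ⨆ n, min (a n) (c n) + 1 = min (⨆ n, a n + 1) (⨆ n, c n + 1) := by
  have hsucc : Monotone fun x : Ordinal ↦ x + 1 := fun _ _ h ↦ add_le_add_left h 1
  simp only [hsucc.map_min]
  exact (hsucc.comp ha).ciSup_min (hsucc.comp hc) bddAbove_of_small bddAbove_of_small

end Ordinal

theorem stmt0_general (γ : Ordinal) (hγcount : γ.card ≤ Cardinal.aleph0)
    (a : ℕ → Ordinal) (ha : Monotone a) (hsup : (⨆ n, a n + 1) = γ)
    (α : Ordinal) (hα1 : 1 < α) (hαγ : α ≤ γ) :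
    ∃ b : ℕ → Ordinal, Monotone b ∧ (∀ n, b n ≤ a n) ∧ (⨆ n, b n + 1) = α := by
  obtain ⟨c, hc, hcα⟩ := Ordinal.exists_monotone_iSup_add_one_eq
    ((Ordinal.card_le_card hαγ).trans hγcount) (zero_lt_one.trans hα1).ne'
  refine ⟨fun n ↦ min (a n) (c n), ha.min hc, fun n ↦ min_le_left _ _, ?_⟩
  rw [Ordinal.iSup_min_add_one ha hc, hsup, hcα, min_eq_right hαγ]

/-- essential content of Lemma 2.2 (existence of a coherent
dominated sequence). -/
theorem stmt0 (γ : Ordinal) (hγcount : γ.card ≤ Cardinal.aleph0) (hγ : 1 < γ)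
    (a : ℕ → Ordinal) (ha : Monotone a) (hsup : (⨆ n, a n + 1) = γ)
    (α : Ordinal) (hα1 : 1 < α) (hαγ : α ≤ γ) :
    ∃ b : ℕ → Ordinal, Monotone b ∧ (∀ n, b n ≤ a n) ∧ (⨆ n, b n + 1) = α :=
  stmt0_general γ hγcount a ha hsup α hα1 hαγ
end

section
/- For each countable ordinal γ there exists a family of nondecreasing ω-sequences of ordinals (a_{α}^n)_{n<ω}, indexed by ordinals α with 1 < α ≤ γ, such that for each α, sup_n (a_α^n + 1) = α, and whenever 1 < α < β ≤ γ we have a_α^n ≤ a_β^n for every natural number n. -/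
/-!
Enumerate the countably many ordinals below `γ` as `g 0, g 1, …` and let `a α n` be the largest of
`g 0, …, g (n - 1)` that lies below `α`. Each `a α n` is below `α`, and every `ξ < α` is some `g k`,
so `ξ ≤ a α (k + 1)`; hence `sup_n (a α n + 1) = α`. Enlarging `α` or `n` only enlarges the finite
set whose supremum is taken, which gives monotonicity in both arguments.
-/

open Set

section SupBelow

variable {α : Type*} [LinearOrder α] [OrderBot α]

def supBelow (g : ℕ → α) (a : α) (n : ℕ) : α :=
  ((Finset.range n).filter (g · < a)).sup g

variable (g : ℕ → α)

theorem monotone_supBelow (a : α) : Monotone (supBelow g a) := fun _ _ hmn =>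
  Finset.sup_mono (Finset.filter_subset_filter _ (Finset.range_subset_range.mpr hmn))

theorem supBelow_mono {a b : α} (hab : a ≤ b) (n : ℕ) : supBelow g a n ≤ supBelow g b n :=
  Finset.sup_mono fun _ hk => by
    rw [Finset.mem_filter] at hk ⊢
    exact ⟨hk.1, hk.2.trans_le hab⟩

theorem supBelow_lt {a : α} (ha : ⊥ < a) (n : ℕ) : supBelow g a n < a :=
  (Finset.sup_lt_iff ha).mpr fun _ hk => (Finset.mem_filter.mp hk).2

theorem le_supBelow_succ {a : α} {k : ℕ} (hk : g k < a) : g k ≤ supBelow g a (k + 1) :=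
  Finset.le_sup (Finset.mem_filter.mpr ⟨Finset.self_mem_range_succ k, hk⟩)

end SupBelow

theorem Ordinal.iSup_supBelow_add_one {g : ℕ → Ordinal} {α : Ordinal} (hα : 0 < α)
    (hg : Iio α ⊆ range g) : ⨆ n, supBelow g α n + 1 = α := by
  apply le_antisymm (Ordinal.iSup_le fun n => Order.add_one_le_of_lt (supBelow_lt g hα n))
  refine le_of_forall_lt fun ξ hξ => ?_
  obtain ⟨k, rfl⟩ := hg hξ
  calc g k < supBelow g α (k + 1) + 1 := Order.lt_add_one_iff.mpr (le_supBelow_succ g hξ)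
    _ ≤ ⨆ n, supBelow g α n + 1 := Ordinal.le_iSup (fun n => supBelow g α n + 1) (k + 1)

theorem Ordinal.exists_range_superset_Iio {γ : Ordinal} (hγ : γ.card ≤ Cardinal.aleph0) :
    ∃ g : ℕ → Ordinal, Iio γ ⊆ range g := by
  refine countable_iff_exists_subset_range.mp ?_
  rwa [← Cardinal.le_aleph0_iff_set_countable, Cardinal.mk_Iio_ordinal, Cardinal.lift_le_aleph0]

/-- Lemma 2.2. For each countable ordinal γ there is a coherent
system of nondecreasing ω-sequences of ordinals indexed by 1 < α ≤ γ. -/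
theorem stmt1 (γ : Ordinal) (hγcount : γ.card ≤ Cardinal.aleph0) :
    ∃ a : Ordinal → ℕ → Ordinal,
      (∀ α, 1 < α → α ≤ γ → Monotone (a α) ∧ (⨆ n, a α n + 1) = α) ∧
      (∀ α β, 1 < α → α < β → β ≤ γ → ∀ n, a α n ≤ a β n) := by
  obtain ⟨g, hg⟩ := Ordinal.exists_range_superset_Iio hγcount
  refine ⟨supBelow g, fun α hα hαγ => ⟨monotone_supBelow g α, ?_⟩,
    fun α β _ hαβ _ => supBelow_mono g hαβ.le⟩
  exact Ordinal.iSup_supBelow_add_one (zero_lt_one.trans hα)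
    ((Iio_subset_Iio hαγ).trans hg)
end

section
/- Assume 𝔡 = 𝔠. Then every filter on ℕ generated by fewer than 𝔠 sets can be extended to a P-point; conversely, if every filter generated by fewer than 𝔠 sets extends to a P-point, then 𝔡 = 𝔠. -/
/-!
If `𝔡 = 𝔠`, enumerate all sequences `A : ℕ → Set ℕ` in order type `𝔠` and refine the given
filter along this enumeration, adding at each stage one pseudo-intersection of the current
sequence whenever one is compatible with the filter built so far. Every stage is generated by
fewer than `𝔠 = 𝔡` sets, and for such a filter compatibility with all finite intersections of the
`A n` already yields a compatible pseudo-intersection. Any ultrafilter refining the final filter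
is a P-point: each of its sequences is compatible with the stage at which it was enumerated.

If `𝔡 < 𝔠`, view `ℕ` as `ℕ × ℕ` and take the filter generated by the column tails and by the
regions above the graphs of a dominating family `D` of size `𝔡`. A pseudo-intersection `S` of the
column tails has finite columns; the function bounding them is dominated by some `f ∈ D`, so `S`
misses the region above the graph of `f`, and no P-point refines this filter.
-/

/-- A P-point: a free ultrafilter on ℕ such that every countable family of its
members admits a pseudo-intersection in the ultrafilter. -/
def IsPPoint (U : Ultrafilter ℕ) : Prop :=
  (↑U : Filter ℕ) ≤ Filter.cofinite ∧
  ∀ A : ℕ → Set ℕ, (∀ n, A n ∈ U) → ∃ S ∈ U, ∀ n, (S \ A n).Finite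

/-- The dominating number 𝔡. -/
noncomputable def dNum : Cardinal :=
  sInf {c | ∃ D : Set (ℕ → ℕ), (∀ g : ℕ → ℕ, ∃ f ∈ D, ∀ n, g n < f n) ∧
    c = Cardinal.mk D}

open Set Filter Cardinal

lemma dNum_le_mk {D : Set (ℕ → ℕ)} (hD : ∀ g : ℕ → ℕ, ∃ f ∈ D, ∀ n, g n < f n) : dNum ≤ #D :=
  csInf_le' ⟨D, hD, rfl⟩

lemma exists_dominating_mk_eq_dNum :
    ∃ D : Set (ℕ → ℕ), (∀ g : ℕ → ℕ, ∃ f ∈ D, ∀ n, g n < f n) ∧ #D = dNum := by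
  obtain ⟨D, hD, hcard⟩ : dNum ∈ _ := csInf_mem
    ⟨_, univ, fun g => ⟨g + 1, mem_univ _, fun n => Nat.lt_succ_self (g n)⟩, rfl⟩
  exact ⟨D, hD, hcard.symm⟩

lemma dNum_le_continuum : dNum ≤ 𝔠 := by
  obtain ⟨D, -, hcard⟩ := exists_dominating_mk_eq_dNum
  exact hcard ▸ (mk_set_le D).trans_eq (by simp)

lemma exists_undominated_of_mk_lt_dNum {D : Set (ℕ → ℕ)} (hD : #D < dNum) :
    ∃ g : ℕ → ℕ, ∀ f ∈ D, ∃ n, f n ≤ g n := by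
  by_contra! h
  exact (dNum_le_mk h).not_gt hD

lemma exists_undominated_of_countable {D : Set (ℕ → ℕ)} (hD : D.Countable) :
    ∃ g : ℕ → ℕ, ∀ f ∈ D, ∃ n, f n ≤ g n := by
  rcases D.eq_empty_or_nonempty with rfl | hne
  · exact ⟨0, by simp⟩
  obtain ⟨F, rfl⟩ := hD.exists_eq_range hne
  exact ⟨fun n => F n n, by rintro _ ⟨i, rfl⟩; exact ⟨i, le_rfl⟩⟩

lemma aleph0_lt_dNum : ℵ₀ < dNum := by
  obtain ⟨D, hD, hcard⟩ := exists_dominating_mk_eq_dNum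
  by_contra! h
  obtain ⟨g, hg⟩ := exists_undominated_of_countable (D := D)
    (countable_coe_iff.1 (mk_le_aleph0_iff.1 (hcard ▸ h)))
  obtain ⟨f, hf, hgf⟩ := hD g
  obtain ⟨n, hn⟩ := hg f hf
  exact (hgf n).not_ge hn

-- Shifting by `k` and taking running maxima turns "somewhere" into "beyond every `k`".
lemma exists_frequently_le_of_mk_lt_dNum {D : Set (ℕ → ℕ)} (hD : #D < dNum) :
    ∃ g : ℕ → ℕ, ∀ f ∈ D, ∃ᶠ n in atTop, f n ≤ g n := by
  let shifts : Set (ℕ → ℕ) := range fun p : D × ℕ => fun n => p.1.1 (n + p.2)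
  have hshifts : #shifts < dNum := by
    refine mk_range_le.trans_lt ?_
    rw [mk_prod, lift_id, lift_id, mk_nat]
    exact mul_lt_of_lt aleph0_lt_dNum.le hD aleph0_lt_dNum
  obtain ⟨g, hg⟩ := exists_undominated_of_mk_lt_dNum hshifts
  refine ⟨fun m => (Finset.range (m + 1)).sup g, fun f hf => frequently_atTop.2 fun k => ?_⟩
  obtain ⟨n, hn⟩ := hg _ ⟨(⟨f, hf⟩, k), rfl⟩
  exact ⟨n + k, Nat.le_add_left k n,
    hn.trans (Finset.le_sup (Finset.mem_range.2 (by omega)))⟩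

lemma exists_pseudoIntersection_inter_infinite {T : Set (Set ℕ)} (hT : #T < dNum)
    {C : ℕ → Set ℕ} (hC : Antitone C) (hTC : ∀ X ∈ T, ∀ n, (X ∩ C n).Infinite) :
    ∃ S : Set ℕ, (∀ n, (S \ C n).Finite) ∧ ∀ X ∈ T, (X ∩ S).Infinite := by
  -- `f X n` is a point of `X ∩ C n` above `n`; `S` keeps the points of each `C n` below `g n`.
  choose f hf using fun (X : T) n => (hTC X X.2 n).exists_gt n
  obtain ⟨g, hg⟩ := exists_frequently_le_of_mk_lt_dNum (D := range f) (mk_range_le.trans_lt hT)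
  refine ⟨⋃ n, C n ∩ Iic (g n), fun k => ?_, fun X hX => ?_⟩
  · refine ((finite_lt_nat k).biUnion fun n _ => finite_Iic (g n)).subset ?_
    simp only [sdiff_subset_iff, iUnion_subset_iff]
    intro n x ⟨hxC, hxg⟩
    by_cases hnk : n < k
    · exact Or.inr (mem_biUnion hnk hxg)
    · exact Or.inl (hC (not_lt.1 hnk) hxC)
  · refine infinite_of_forall_exists_gt fun a => ?_
    obtain ⟨n, han, hn⟩ := frequently_atTop.1 (hg _ ⟨⟨X, hX⟩, rfl⟩) a
    obtain ⟨⟨hfX, hfC⟩, hnf⟩ := hf ⟨X, hX⟩ n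
    exact ⟨f ⟨X, hX⟩ n, ⟨hfX, mem_iUnion.2 ⟨n, hfC, hn⟩⟩, han.trans_lt hnf⟩

lemma mk_setOf_finite_subset_le {α : Type*} (G : Set α) :
    #{t : Set α | t.Finite ∧ t ⊆ G} ≤ max ℵ₀ #G := by
  refine (mk_le_mk_of_subset (t := range fun l : List G => (↑) '' {x | x ∈ l}) ?_).trans
    (mk_range_le.trans (mk_list_le_max G))
  rintro t ⟨hfin, htG⟩
  refine ⟨(hfin.preimage Subtype.val_injective.injOn).toFinset.toList, ?_⟩
  simp [htG]

lemma Set.Infinite.of_mem_of_le_cofinite {α : Type*} {f : Filter α} [f.NeBot] (hf : f ≤ cofinite)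
    {s : Set α} (hs : s ∈ f) : s.Infinite :=
  cofinite_inf_principal_neBot_iff.1 (.mono ‹_› (le_inf hf (le_principal_iff.2 hs)))

lemma exists_pseudoIntersection_inf_principal_neBot {G : Set (Set ℕ)} (hG : #G < dNum)
    (hcof : generate G ≤ cofinite) {A : ℕ → Set ℕ} (hA : (generate G ⊓ ⨅ n, 𝓟 (A n)).NeBot) :
    ∃ S : Set ℕ, (∀ n, (S \ A n).Finite) ∧ (generate G ⊓ 𝓟 S).NeBot := by
  let T := sInter '' {t : Set (Set ℕ) | t.Finite ∧ t ⊆ G}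
  have hT : #T < dNum := mk_image_le.trans_lt <| (mk_setOf_finite_subset_le G).trans_lt <|
    max_lt aleph0_lt_dNum hG
  let C n := ⋂ i ∈ Iic n, A i
  have hC : Antitone C := fun m n hmn => biInter_subset_biInter_left (Iic_subset_Iic.2 hmn)
  have hTC : ∀ X ∈ T, ∀ n, (X ∩ C n).Infinite := by
    rintro _ ⟨t, ht, rfl⟩ n
    refine .of_mem_of_le_cofinite (f := generate G ⊓ ⨅ n, 𝓟 (A n)) (inf_le_left.trans hcof)
      (inter_mem_inf ?_ ?_)
    · exact (hasBasis_generate G).mem_of_mem ht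
    · exact (biInter_mem (finite_Iic n)).2 fun i _ => mem_iInf_of_mem i (mem_principal_self _)
  obtain ⟨S, hSC, hST⟩ := exists_pseudoIntersection_inter_infinite hT hC hTC
  have hCA : ∀ n, C n ⊆ A n := fun n => biInter_subset_of_mem self_mem_Iic
  refine ⟨S, fun n => (hSC n).subset (sdiff_subset_sdiff_right (hCA n)), ?_⟩
  exact (hasBasis_generate G).inf_principal_neBot_iff.2 fun t ht => (hST _ ⟨t, ht, rfl⟩).nonempty

namespace Ketonen

variable {α ι : Type*}

open Classical in
noncomputable def choosePseudoIntersection (H : Filter α) (A : ℕ → Set α) : Set α :=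
  if h : ∃ S, (∀ n, (S \ A n).Finite) ∧ (H ⊓ 𝓟 S).NeBot then h.choose else univ

lemma inf_principal_choosePseudoIntersection_neBot {H : Filter α} [H.NeBot] (A : ℕ → Set α) :
    (H ⊓ 𝓟 (choosePseudoIntersection H A)).NeBot := by
  unfold choosePseudoIntersection
  split_ifs with h
  · exact h.choose_spec.2
  · simpa

lemma choosePseudoIntersection_diff_finite {H : Filter α} {A : ℕ → Set α}
    (h : ∃ S, (∀ n, (S \ A n).Finite) ∧ (H ⊓ 𝓟 S).NeBot) (n : ℕ) :
    (choosePseudoIntersection H A \ A n).Finite := by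
  rw [choosePseudoIntersection, dif_pos h]
  exact h.choose_spec.1 n

variable [LinearOrder ι] [WellFoundedLT ι] (F : Filter α) (task : ι → ℕ → Set α)

/-- Adding one set per stage bounds the generators of stage `i` by `#B + #(Iio i) < 𝔠` without
assuming `𝔠` regular. -/
noncomputable def stageSet : ι → Set α :=
  wellFounded_lt.fix fun i S =>
    choosePseudoIntersection (F ⊓ ⨅ (j) (h : j < i), 𝓟 (S j h)) (task i)

def stageFilter (J : Set ι) : Filter α :=
  F ⊓ ⨅ j ∈ J, 𝓟 (stageSet F task j)

lemma stageSet_eq (i : ι) :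
    stageSet F task i = choosePseudoIntersection (stageFilter F task (Iio i)) (task i) :=
  wellFounded_lt.fix_eq _ i

lemma stageFilter_le (J : Set ι) : stageFilter F task J ≤ F := inf_le_left

lemma stageFilter_le_principal {J : Set ι} {j : ι} (hj : j ∈ J) :
    stageFilter F task J ≤ 𝓟 (stageSet F task j) :=
  inf_le_right.trans (biInf_le _ hj)

lemma stageFilter_antitone : Antitone (stageFilter F task) :=
  fun _ _ hJ => inf_le_inf_left _ (biInf_mono hJ)

lemma stageFilter_Iic (j : ι) :
    stageFilter F task (Iic j) = stageFilter F task (Iio j) ⊓ 𝓟 (stageSet F task j) := by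
  rw [stageFilter, stageFilter, ← Iio_insert, iInf_insert]
  ac_rfl

lemma stageFilter_neBot_of_forall_Iic [F.NeBot] {J : Set ι}
    (hJ : ∀ j ∈ J, (stageFilter F task (Iic j)).NeBot) : (stageFilter F task J).NeBot := by
  rcases J.eq_empty_or_nonempty with rfl | ⟨j₀, hj₀⟩
  · simpa [stageFilter]
  have : Nonempty J := ⟨⟨j₀, hj₀⟩⟩
  have hdir : Directed (· ≥ ·) fun j : J => stageFilter F task (Iic j) :=
    Antitone.directed_ge fun _ _ hjk => stageFilter_antitone F task (Iic_subset_Iic.2 hjk)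
  refine (iInf_neBot_of_directed' hdir fun j => hJ j j.2).mono
    (le_inf ?_ (le_iInf₂ fun j hj => ?_))
  · exact iInf_le_of_le ⟨j₀, hj₀⟩ (stageFilter_le F task _)
  · exact iInf_le_of_le ⟨j, hj⟩ (stageFilter_le_principal F task self_mem_Iic)

lemma stageFilter_Iic_neBot [F.NeBot] (j : ι) : (stageFilter F task (Iic j)).NeBot := by
  induction j using WellFoundedLT.induction with
  | _ j ih =>
    have := stageFilter_neBot_of_forall_Iic F task (J := Iio j) ih
    rw [stageFilter_Iic, stageSet_eq]
    exact inf_principal_choosePseudoIntersection_neBot _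

lemma stageFilter_neBot [F.NeBot] (J : Set ι) : (stageFilter F task J).NeBot :=
  stageFilter_neBot_of_forall_Iic F task fun j _ => stageFilter_Iic_neBot F task j

lemma stageFilter_eq_generate {B : Set (Set α)} (hF : F = generate B) (J : Set ι) :
    stageFilter F task J = generate (B ∪ stageSet F task '' J) := by
  rw [generate_union, generate_eq_biInf (stageSet F task '' J), iInf_image, ← hF, stageFilter]

end Ketonen

open Ketonen in
theorem exists_isPPoint_le_generate (hd : dNum = 𝔠) {B : Set (Set ℕ)} (hB : #B < 𝔠)
    [(generate B).NeBot] (hcof : generate B ≤ cofinite) :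
    ∃ U : Ultrafilter ℕ, IsPPoint U ∧ ↑U ≤ generate B := by
  obtain ⟨e⟩ : Nonempty ((𝔠 : Cardinal.{0}).ord.ToType ≃ (ℕ → Set ℕ)) :=
    Cardinal.eq.1 (by simp [mk_toType])
  let L := stageFilter (generate B) e univ
  have : L.NeBot := stageFilter_neBot _ _ _
  let U := Ultrafilter.of L
  have hUL : ↑U ≤ L := Ultrafilter.of_le L
  refine ⟨U, ⟨hUL.trans ((stageFilter_le _ _ _).trans hcof), fun A hA => ?_⟩,
    hUL.trans (stageFilter_le _ _ _)⟩
  obtain ⟨i, rfl⟩ := e.surjective A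
  have hgen := stageFilter_eq_generate (generate B) e rfl (Iio i)
  have hsmall : #↑(B ∪ stageSet (generate B) e '' Iio i) < dNum := by
    rw [hd]
    exact (mk_union_le _ _).trans_lt (add_lt_of_lt aleph0_le_continuum hB
      (mk_image_le.trans_lt (by simpa using mk_Iio_lt i)))
  have hUi : ↑U ≤ stageFilter (generate B) e (Iio i) :=
    hUL.trans (stageFilter_antitone _ _ (subset_univ _))
  have hAi : (stageFilter (generate B) e (Iio i) ⊓ ⨅ n, 𝓟 (e i n)).NeBot :=
    U.neBot.mono (le_inf hUi (le_iInf fun n => le_principal_iff.2 (hA n)))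
  rw [hgen] at hAi
  have hpseudo := exists_pseudoIntersection_inf_principal_neBot hsmall
    (hgen ▸ (stageFilter_le _ _ _).trans hcof) hAi
  refine ⟨stageSet (generate B) e i,
    hUL (le_principal_iff.1 (stageFilter_le_principal _ _ (mem_univ i))), fun n => ?_⟩
  rw [stageSet_eq, hgen]
  exact choosePseudoIntersection_diff_finite hpseudo n

-- `ℕ` is read as `ℕ × ℕ` through `Nat.unpair`, the first coordinate being the column.
def columnsBeyond (n : ℕ) : Set ℕ := {x | n < x.unpair.1}

def aboveGraph (f : ℕ → ℕ) : Set ℕ := {x | f x.unpair.1 < x.unpair.2}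

def dominationGens (D : Set (ℕ → ℕ)) : Set (Set ℕ) := range columnsBeyond ∪ aboveGraph '' D

lemma comap_unpair_curry_le_generate_dominationGens (D : Set (ℕ → ℕ)) :
    comap Nat.unpair (atTop.curry atTop) ≤ generate (dominationGens D) := by
  refine le_generate_iff.2 ?_
  rintro _ (⟨n, rfl⟩ | ⟨f, -, rfl⟩)
  · exact preimage_mem_comap (t := {p : ℕ × ℕ | n < p.1}) <| mem_curry_iff.2 <|
      (eventually_gt_atTop n).mono fun _ h => Eventually.of_forall fun _ => h
  · exact preimage_mem_comap (t := {p : ℕ × ℕ | f p.1 < p.2}) <| mem_curry_iff.2 <|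
      Eventually.of_forall fun x => eventually_gt_atTop (f x)

lemma generate_dominationGens_neBot (D : Set (ℕ → ℕ)) : (generate (dominationGens D)).NeBot := by
  have : (atTop.curry atTop : Filter (ℕ × ℕ)).NeBot :=
    (frequently_true_iff_neBot _).1 <| (frequently_curry_iff _).2 <|
      .of_forall fun _ => (frequently_true_iff_neBot _).2 inferInstance
  exact (this.comap_of_surj Nat.surjective_unpair).mono
    (comap_unpair_curry_le_generate_dominationGens D)

lemma generate_dominationGens_le_cofinite (D : Set (ℕ → ℕ)) :
    generate (dominationGens D) ≤ cofinite := by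
  refine le_cofinite_iff_compl_singleton_mem.2 fun x => ?_
  refine mem_of_superset (mem_generate_of_mem (Or.inl ⟨x.unpair.1, rfl⟩)) ?_
  rintro y hy rfl
  exact lt_irrefl y.unpair.1 hy

lemma mk_dominationGens_lt_continuum {D : Set (ℕ → ℕ)} (hD : #D < 𝔠) :
    #(dominationGens D) < 𝔠 :=
  (mk_union_le _ _).trans_lt <| add_lt_of_lt aleph0_le_continuum
    (mk_range_le.trans_lt (by simpa using aleph0_lt_continuum)) (mk_image_le.trans_lt hD)

lemma not_isPPoint_of_le_generate_dominationGens {D : Set (ℕ → ℕ)}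
    (hD : ∀ g : ℕ → ℕ, ∃ f ∈ D, ∀ n, g n < f n) {U : Ultrafilter ℕ}
    (hU : ↑U ≤ generate (dominationGens D)) : ¬ IsPPoint U := by
  rintro ⟨-, hP⟩
  obtain ⟨S, hSU, hS⟩ := hP columnsBeyond fun n => hU (mem_generate_of_mem (Or.inl ⟨n, rfl⟩))
  choose g hg using fun n => ((hS n).image fun x => x.unpair.2).bddAbove
  obtain ⟨f, hf, hgf⟩ := hD g
  obtain ⟨x, hxS, hx⟩ := U.nonempty_of_mem
    (inter_mem hSU (hU (mem_generate_of_mem (Or.inr ⟨f, hf, rfl⟩))))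
  have hxg : x.unpair.2 ≤ g x.unpair.1 := hg _ ⟨x, ⟨hxS, lt_irrefl x.unpair.1⟩, rfl⟩
  exact (hxg.trans_lt ((hgf _).trans hx)).false

/-- Ketonen's theorem. `𝔡 = 𝔠` iff every free filter on ℕ
generated by fewer than 𝔠 sets can be extended to a P-point. -/
theorem stmt14 :
    dNum = Cardinal.continuum ↔
    ∀ (F : Filter ℕ), F ≠ ⊥ → F ≤ Filter.cofinite →
      (∃ B : Set (Set ℕ), Cardinal.mk B < Cardinal.continuum ∧
        F = Filter.generate B) →
      ∃ U : Ultrafilter ℕ, IsPPoint U ∧ (↑U : Filter ℕ) ≤ F := by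
  constructor
  · rintro hd F hF hcof ⟨B, hB, rfl⟩
    have : (generate B).NeBot := ⟨hF⟩
    exact exists_isPPoint_le_generate hd hB hcof
  · intro h
    by_contra hne
    obtain ⟨D, hD, hcard⟩ := exists_dominating_mk_eq_dNum
    have hDsmall : #D < 𝔠 := hcard ▸ dNum_le_continuum.lt_of_ne hne
    obtain ⟨U, hU, hUD⟩ := h _ (generate_dominationGens_neBot D).ne
      (generate_dominationGens_le_cofinite D) ⟨_, mk_dominationGens_lt_continuum hDsmall, rfl⟩
    exact not_isPPoint_of_le_generate_dominationGens hD hUD hU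
end
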